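/- Exact preservation of the discrete ground state by the fully discrete scheme: fix h > 0, an integer K ≥ 0, λ_h > 0 and τ > 0 with τ·λ_h < 1. Suppose η_h ∈ ℝ^ℤ satisfies η_h^ℓ = 0 for |ℓ| > K, the discrete Euler–Lagrange equation (1/2)·(Δ_h η_h)^ℓ + (η_h^ℓ)³ = λ_h·η_h^ℓ for all |ℓ| ≤ K, and N_h(η_h) = 1. Then ψ* := (1 − τλ_h)^{−1}·η_h satisfies ψ*^ℓ = η_h^ℓ + τ·( (1/2)·(Δ_h ψ*)^ℓ + (η_h^ℓ)²·ψ*^ℓ ) for all |ℓ| ≤ K and ψ*^ℓ = 0 for |ℓ| > K, and ψ*/√(N_h(ψ*)) = η_h; i.e. the fully discrete linearly implicit step followed by normalization fixes η_h. -/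

import Mathlib

/-- Discrete Laplacian with mesh `h`: `(Δ_h φ)^ℓ = (φ^{ℓ+1} + φ^{ℓ−1} − 2φ^ℓ)/h²`. -/
noncomputable def dLap (h : ℝ) (φ : ℤ → ℝ) (ℓ : ℤ) : ℝ :=
  (φ (ℓ + 1) + φ (ℓ - 1) - 2 * φ ℓ) / h^2

/-- Squared discrete `L²` norm: `N_h(φ) = h ∑_j (φ^j)²`. -/
noncomputable def Nh (h : ℝ) (φ : ℤ → ℝ) : ℝ := h * ∑' j : ℤ, (φ j)^2

/-! The ground state is an eigenvector of the linear operator `½Δ_h + η_h²` with eigenvalue `λ_h`,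
so the implicit step `(1 − τ(½Δ_h + η_h²)) ψ* = η_h` is solved by `(1 − τλ_h)⁻¹ η_h`. Since
`1 − τλ_h > 0`, this is a positive multiple of `η_h`, and normalization removes it. -/

lemma dLap_const_mul (h c : ℝ) (φ : ℤ → ℝ) (ℓ : ℤ) :
    dLap h (fun j => c * φ j) ℓ = c * dLap h φ ℓ := by
  simp only [dLap]
  ring

lemma Nh_const_mul (h c : ℝ) (φ : ℤ → ℝ) :
    Nh h (fun j => c * φ j) = c ^ 2 * Nh h φ := by
  simp only [Nh, mul_pow, tsum_mul_left]
  ring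

lemma normalize_const_mul_of_pos {h c : ℝ} (hc : 0 < c) (φ : ℤ → ℝ) :
    (fun ℓ => c * φ ℓ / Real.sqrt (Nh h (fun j => c * φ j))) =
      fun ℓ => φ ℓ / Real.sqrt (Nh h φ) := by
  funext ℓ
  rw [Nh_const_mul, Real.sqrt_mul (sq_nonneg c), Real.sqrt_sq hc.le,
    mul_div_mul_left _ _ hc.ne']

lemma inv_one_sub_mul_solves_implicit_step {h lam τ η : ℝ} (φ : ℤ → ℝ) (ℓ : ℤ)
    (hτlam : τ * lam ≠ 1) (hEL : (1/2) * dLap h φ ℓ + η ^ 2 * φ ℓ = lam * φ ℓ) :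
    (1 - τ * lam)⁻¹ * φ ℓ =
      φ ℓ + τ * ((1/2) * dLap h (fun j => (1 - τ * lam)⁻¹ * φ j) ℓ +
        η ^ 2 * ((1 - τ * lam)⁻¹ * φ ℓ)) := by
  have hne : 1 - τ * lam ≠ 0 := sub_ne_zero.mpr hτlam.symm
  have hstep : (1/2) * dLap h (fun j => (1 - τ * lam)⁻¹ * φ j) ℓ +
      η ^ 2 * ((1 - τ * lam)⁻¹ * φ ℓ) = (1 - τ * lam)⁻¹ * (lam * φ ℓ) := by
    rw [dLap_const_mul, ← hEL]
    ring
  rw [hstep]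
  field_simp
  ring

theorem fully_discrete_scheme_preserves_ground_state_general
    (h : ℝ) (K : ℕ) (lamh τ : ℝ)
    (hτlam : τ * lamh < 1)
    (ηh : ℤ → ℝ)
    (hout : ∀ ℓ : ℤ, (K : ℤ) < |ℓ| → ηh ℓ = 0)
    (hEL : ∀ ℓ : ℤ, |ℓ| ≤ (K : ℤ) →
      (1/2) * dLap h ηh ℓ + (ηh ℓ)^3 = lamh * ηh ℓ)
    (hnorm : Nh h ηh = 1) :
    (∀ ℓ : ℤ, |ℓ| ≤ (K : ℤ) →
      (1 - τ * lamh)⁻¹ * ηh ℓ =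
        ηh ℓ + τ * ((1/2) * dLap h (fun j => (1 - τ * lamh)⁻¹ * ηh j) ℓ +
          (ηh ℓ)^2 * ((1 - τ * lamh)⁻¹ * ηh ℓ))) ∧
    (∀ ℓ : ℤ, (K : ℤ) < |ℓ| → (1 - τ * lamh)⁻¹ * ηh ℓ = 0) ∧
    (fun ℓ => (1 - τ * lamh)⁻¹ * ηh ℓ /
      Real.sqrt (Nh h (fun j => (1 - τ * lamh)⁻¹ * ηh j))) = ηh := by
  refine ⟨fun ℓ hℓ => ?_, fun ℓ hℓ => by rw [hout ℓ hℓ, mul_zero], ?_⟩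
  · refine inv_one_sub_mul_solves_implicit_step ηh ℓ hτlam.ne ?_
    rw [← hEL ℓ hℓ]
    ring
  · rw [normalize_const_mul_of_pos (inv_pos.mpr (sub_pos.mpr hτlam)), hnorm,
      Real.sqrt_one]
    simp only [div_one]

/-- exact preservation of the discrete ground state by the fully discrete scheme:
if `η_h` solves the discrete Euler–Lagrange equation with multiplier `λ_h` and `N_h(η_h) = 1`,
and `τλ_h < 1`, then `ψ* = (1 − τλ_h)⁻¹ η_h` solves the fully discrete linearly implicit step
with data `η_h`, and its normalization is `η_h` again. -/
theorem fully_discrete_scheme_preserves_ground_state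
    (h : ℝ) (hh : 0 < h) (K : ℕ) (lamh τ : ℝ) (hlam : 0 < lamh) (hτ0 : 0 < τ)
    (hτlam : τ * lamh < 1)
    (ηh : ℤ → ℝ)
    (hout : ∀ ℓ : ℤ, (K : ℤ) < |ℓ| → ηh ℓ = 0)
    (hEL : ∀ ℓ : ℤ, |ℓ| ≤ (K : ℤ) →
      (1/2) * dLap h ηh ℓ + (ηh ℓ)^3 = lamh * ηh ℓ)
    (hnorm : Nh h ηh = 1) :
    (∀ ℓ : ℤ, |ℓ| ≤ (K : ℤ) →
      (1 - τ * lamh)⁻¹ * ηh ℓ =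
        ηh ℓ + τ * ((1/2) * dLap h (fun j => (1 - τ * lamh)⁻¹ * ηh j) ℓ +
          (ηh ℓ)^2 * ((1 - τ * lamh)⁻¹ * ηh ℓ))) ∧
    (∀ ℓ : ℤ, (K : ℤ) < |ℓ| → (1 - τ * lamh)⁻¹ * ηh ℓ = 0) ∧
    (fun ℓ => (1 - τ * lamh)⁻¹ * ηh ℓ /
      Real.sqrt (Nh h (fun j => (1 - τ * lamh)⁻¹ * ηh j))) = ηh :=
  fully_discrete_scheme_preserves_ground_state_general h K lamh τ hτlam ηh hout hEL hnorm
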